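/- arXiv:2207.08617 — 4 statements merged into one kernel-verified Lean document; each statement's English description precedes it below -/
import Mathlib

section
/- Let $n, m$ be integers with $2 \le m \le n-1$. Let $(h_{pq})_{2 \le p,q \le n}$ be a symmetric array of real numbers (i.e. $h_{pq} = h_{qp}$ for all $p,q$) whose trace vanishes, $\sum_{p=2}^n h_{pp} = 0$. Then $$\sum_{p=2}^n \sum_{q=2}^n h_{pq}^2 \; + \; \sum_{p=2}^m \sum_{q=p+1}^n \left( h_{pp} h_{qq} - h_{pq}^2 \right) \; \ge \; \frac{m^2 - 2 - n(m-2)}{2(n-m)(m-1)} \left( \sum_{p=2}^m h_{pp} \right)^2.$$ -/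
open Finset

private lemma sq_sum_Ioc_aux (a : ℕ → ℝ) (k m : ℕ) (hkm : k ≤ m) :
    (∑ p ∈ Finset.Ioc k m, a p) ^ 2 =
      ∑ p ∈ Finset.Ioc k m, (a p) ^ 2
        + 2 * ∑ p ∈ Finset.Ioc k m, a p * ∑ q ∈ Finset.Ioc p m, a q := by
  induction m, hkm using Nat.le_induction with
  | base => simp
  | succ m hk ih =>
    have e1 := Finset.sum_Ioc_succ_top hk a
    have e2 := Finset.sum_Ioc_succ_top hk (fun p => a p ^ 2)
    have e3 : ∑ p ∈ Finset.Ioc k (m+1), a p * ∑ q ∈ Finset.Ioc p (m+1), a q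
        = (∑ p ∈ Finset.Ioc k m, a p * ∑ q ∈ Finset.Ioc p m, a q)
            + (∑ p ∈ Finset.Ioc k m, a p) * a (m+1) := by
      rw [Finset.sum_Ioc_succ_top hk
          (fun p => a p * ∑ q ∈ Finset.Ioc p (m+1), a q)]
      have h1 : ∑ p ∈ Finset.Ioc k m, a p * ∑ q ∈ Finset.Ioc p (m+1), a q
          = ∑ p ∈ Finset.Ioc k m, (a p * ∑ q ∈ Finset.Ioc p m, a q + a p * a (m+1)) := by
        refine Finset.sum_congr rfl fun p hp => ?_
        rw [Finset.sum_Ioc_succ_top (Finset.mem_Ioc.mp hp).2]; ring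
      rw [h1, Finset.sum_add_distrib, ← Finset.sum_mul, Finset.Ioc_self, Finset.sum_empty]
      ring
    rw [e1, e2, e3]
    linear_combination ih

/-- Extrinsic curvature terms on the top slice (algebraic content):
for a symmetric trace-free array `h` indexed by `2, …, n`. -/
theorem stmt_0 (n m : ℕ) (hm : 2 ≤ m) (hmn : m ≤ n - 1) (h : ℕ → ℕ → ℝ)
    (hsym : ∀ p ∈ Finset.Icc 2 n, ∀ q ∈ Finset.Icc 2 n, h p q = h q p)
    (htrace : ∑ p ∈ Finset.Icc 2 n, h p p = 0) :
    ∑ p ∈ Finset.Icc 2 n, ∑ q ∈ Finset.Icc 2 n, (h p q) ^ 2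
      + ∑ p ∈ Finset.Icc 2 m, ∑ q ∈ Finset.Icc (p + 1) n, (h p p * h q q - (h p q) ^ 2)
    ≥ ((m : ℝ) ^ 2 - 2 - (n : ℝ) * ((m : ℝ) - 2)) / (2 * ((n : ℝ) - (m : ℝ)) * ((m : ℝ) - 1))
        * (∑ p ∈ Finset.Icc 2 m, h p p) ^ 2 := by
  clear hsym
  have hn : m + 1 ≤ n := by omega
  have hIcc : ∀ b c : ℕ, Finset.Icc (b + 1) c = Finset.Ioc b c := fun b c =>
    Finset.Icc_add_one_left_eq_Ioc b c
  have h2 : ∀ c : ℕ, Finset.Icc 2 c = Finset.Ioc 1 c := fun c => Finset.Icc_add_one_left_eq_Ioc 1 c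
  simp only [h2, hIcc] at htrace ⊢
  set SA := ∑ p ∈ Finset.Ioc 1 m, h p p with hSA
  set SB := ∑ p ∈ Finset.Ioc m n, h p p with hSB
  set D1 := ∑ p ∈ Finset.Ioc 1 m, (h p p) ^ 2 with hD1
  set D2 := ∑ p ∈ Finset.Ioc m n, (h p p) ^ 2 with hD2
  have h1m : (1:ℕ) ≤ m := by omega
  have hmn' : m ≤ n := by omega
  have htr : SA + SB = 0 := by
    rw [hSA, hSB, Finset.sum_Ioc_consecutive _ h1m hmn', htrace]
  set X := ∑ p ∈ Finset.Ioc 1 m, ∑ q ∈ Finset.Ioc p n, (h p q) ^ 2 with hX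
  have hC : ∑ p ∈ Finset.Ioc 1 m, ∑ q ∈ Finset.Ioc p n, (h p p * h q q - (h p q) ^ 2)
      = ((∑ p ∈ Finset.Ioc 1 m, h p p * ∑ q ∈ Finset.Ioc p m, h q q) + SA * SB) - X := by
    have hper : ∀ p ∈ Finset.Ioc 1 m,
        ∑ q ∈ Finset.Ioc p n, (h p p * h q q - (h p q) ^ 2)
          = (h p p * ∑ q ∈ Finset.Ioc p m, h q q + h p p * SB)
              - ∑ q ∈ Finset.Ioc p n, (h p q) ^ 2 := by
      intro p hp
      rw [Finset.sum_sub_distrib, ← Finset.mul_sum,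
        ← Finset.sum_Ioc_consecutive (fun q => h q q) (Finset.mem_Ioc.mp hp).2 hmn', mul_add]
    rw [Finset.sum_congr rfl hper, Finset.sum_sub_distrib, Finset.sum_add_distrib,
      ← Finset.sum_mul, hX]
  have hkey : 2 * ∑ p ∈ Finset.Ioc 1 m, h p p * ∑ q ∈ Finset.Ioc p m, h q q
      = SA ^ 2 - D1 := by
    have := sq_sum_Ioc_aux (fun p => h p p) 1 m h1m
    rw [hSA, hD1]; linarith [this]
  have hF : ∑ p ∈ Finset.Ioc 1 n, ∑ q ∈ Finset.Ioc 1 n, (h p q) ^ 2 ≥ D1 + D2 + X := by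
    rw [← Finset.sum_Ioc_consecutive (fun p => ∑ q ∈ Finset.Ioc 1 n, (h p q) ^ 2) h1m hmn',
      hD1, hD2, hX]
    have hA : ∀ p ∈ Finset.Ioc 1 m,
        (h p p) ^ 2 + ∑ q ∈ Finset.Ioc p n, (h p q) ^ 2
          ≤ ∑ q ∈ Finset.Ioc 1 n, (h p q) ^ 2 := by
      intro p hp
      obtain ⟨hp1, hpm⟩ := Finset.mem_Ioc.mp hp
      rw [← Finset.sum_Ioc_consecutive (fun q => (h p q) ^ 2) (le_of_lt hp1) (hpm.trans hmn')]
      have : (h p p) ^ 2 ≤ ∑ q ∈ Finset.Ioc 1 p, (h p q) ^ 2 :=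
        Finset.single_le_sum (fun q _ => sq_nonneg (h p q))
          (Finset.mem_Ioc.mpr ⟨hp1, le_refl p⟩)
      linarith
    have hB : ∀ p ∈ Finset.Ioc m n, (h p p) ^ 2 ≤ ∑ q ∈ Finset.Ioc 1 n, (h p q) ^ 2 := by
      intro p hp
      obtain ⟨hp1, hpn⟩ := Finset.mem_Ioc.mp hp
      exact Finset.single_le_sum (fun q _ => sq_nonneg (h p q))
        (Finset.mem_Ioc.mpr ⟨lt_of_le_of_lt h1m hp1, hpn⟩)
    have t1 := Finset.sum_le_sum hA
    have t2 := Finset.sum_le_sum hB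
    rw [Finset.sum_add_distrib] at t1
    linarith
  have hcs1 : SA ^ 2 ≤ ((m:ℝ) - 1) * D1 := by
    have := sq_sum_le_card_mul_sum_sq (s := Finset.Ioc 1 m) (f := fun p => h p p)
    rwa [Nat.card_Ioc, Nat.cast_sub h1m, Nat.cast_one] at this
  have hcs2 : SB ^ 2 ≤ ((n:ℝ) - (m:ℝ)) * D2 := by
    have := sq_sum_le_card_mul_sum_sq (s := Finset.Ioc m n) (f := fun p => h p p)
    rwa [Nat.card_Ioc, Nat.cast_sub hmn'] at this
  have hSB' : SB = -SA := by linarith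
  have hc1 : (1:ℝ) ≤ (m:ℝ) - 1 := by
    have : (2:ℝ) ≤ (m:ℝ) := by exact_mod_cast hm
    linarith
  have hc2 : (1:ℝ) ≤ (n:ℝ) - (m:ℝ) := by
    have : ((m:ℝ) + 1) ≤ (n:ℝ) := by exact_mod_cast hn
    linarith
  rw [hC, ge_iff_le, div_mul_eq_mul_div, div_le_iff₀ (by positivity)]
  rw [hSB'] at hcs2 ⊢
  have hcs2' : SA ^ 2 ≤ ((n:ℝ) - (m:ℝ)) * D2 := by nlinarith [hcs2]
  have hL : D1/2 + D2 - SA^2/2 ≤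
      ∑ p ∈ Finset.Ioc 1 n, ∑ q ∈ Finset.Ioc 1 n, (h p q) ^ 2
        + (∑ p ∈ Finset.Ioc 1 m, h p p * ∑ q ∈ Finset.Ioc p m, h q q + SA * -SA - X) := by
    linarith [hF, hkey]
  have hmul : (D1/2 + D2 - SA^2/2) * (2 * ((n:ℝ) - (m:ℝ)) * ((m:ℝ) - 1))
      ≤ (∑ p ∈ Finset.Ioc 1 n, ∑ q ∈ Finset.Ioc 1 n, (h p q) ^ 2
          + (∑ p ∈ Finset.Ioc 1 m, h p p * ∑ q ∈ Finset.Ioc p m, h q q + SA * -SA - X))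
            * (2 * ((n:ℝ) - (m:ℝ)) * ((m:ℝ) - 1)) :=
    mul_le_mul_of_nonneg_right hL (by positivity)
  nlinarith [hmul,
    mul_nonneg (by linarith : (0:ℝ) ≤ (n:ℝ) - m) (by linarith : (0:ℝ) ≤ ((m:ℝ)-1) * D1 - SA^2),
    mul_nonneg (by linarith : (0:ℝ) ≤ 2*((m:ℝ) - 1)) (by linarith : (0:ℝ) ≤ ((n:ℝ)-m) * D2 - SA^2)]
end

section
/- Let $n, m, k$ be integers with $3 \le m \le n-1$ and $2 \le k \le m-1$. Let $(h_{pq})_{k+1 \le p,q \le n}$ be a symmetric array of real numbers (i.e. $h_{pq} = h_{qp}$ for all $p,q$) and set $H = \sum_{p=k+1}^n h_{pp}$. Then $$\sum_{p=k+1}^n \sum_{q=k+1}^n h_{pq}^2 \; - \; \left( \frac{1}{2} - \frac{1}{2(k-1)} \right) H^2 \; + \; \sum_{p=k+1}^m \sum_{q=p+1}^n \left( h_{pp} h_{qq} - h_{pq}^2 \right) \; \ge \; \frac{m^2 - 2 - n(m-2)}{2(m-1)(n-m)} \left( \sum_{q=m+1}^n h_{qq} \right)^2.$$ -/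
/-!
All off-diagonal squares `h p q ^ 2` subtracted in the third sum also occur in the first one, so
after discarding them only the diagonal `d p = h p p` is left. Writing `A` and `B` for the sums of
`d` over `(k, m]` and `(m, n]`, the products `d p * d q` add up to `(A² - ∑ d²) / 2 + A B`, and the
inequality becomes a statement about `A`, `B` and the two blocks of `∑ d²`. It follows from
Cauchy–Schwarz on each block: the difference of the two sides is a positive combination of the
two Cauchy–Schwarz defects and a square.
-/

open Finset

lemma apply_add_sum_Ioc_le_sum_Ioc {g : ℕ → ℝ} (hg : ∀ q, 0 ≤ g q) {a p c : ℕ}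
    (hp : p ∈ Ioc a c) : g p + ∑ q ∈ Ioc p c, g q ≤ ∑ q ∈ Ioc a c, g q := by
  rw [← sum_insert (by simp)]
  refine sum_le_sum_of_subset_of_nonneg ?_ fun q _ _ => hg q
  intro q hq
  rcases mem_insert.mp hq with rfl | hq
  · exact hp
  · exact Ioc_subset_Ioc_left (mem_Ioc.mp hp).1.le hq

lemma sum_diag_add_sum_upper_le_sum_sum {g : ℕ → ℕ → ℝ} (hg : ∀ p q, 0 ≤ g p q) {a b c : ℕ}
    (hbc : b ≤ c) :
    ∑ p ∈ Ioc a c, g p p + ∑ p ∈ Ioc a b, ∑ q ∈ Ioc p c, g p q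
      ≤ ∑ p ∈ Ioc a c, ∑ q ∈ Ioc a c, g p q := by
  calc ∑ p ∈ Ioc a c, g p p + ∑ p ∈ Ioc a b, ∑ q ∈ Ioc p c, g p q
      ≤ ∑ p ∈ Ioc a c, g p p + ∑ p ∈ Ioc a c, ∑ q ∈ Ioc p c, g p q := by
        refine add_le_add le_rfl <| sum_le_sum_of_subset_of_nonneg (Ioc_subset_Ioc_right hbc) ?_
        exact fun p _ _ => sum_nonneg fun q _ => hg p q
    _ = ∑ p ∈ Ioc a c, (g p p + ∑ q ∈ Ioc p c, g p q) := sum_add_distrib.symm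
    _ ≤ ∑ p ∈ Ioc a c, ∑ q ∈ Ioc a c, g p q :=
        sum_le_sum fun p hp => apply_add_sum_Ioc_le_sum_Ioc (hg p) hp

lemma sq_sum_Ioc_eq_sum_sq_add_two_mul_sum_lt (d : ℕ → ℝ) (a b : ℕ) :
    (∑ p ∈ Ioc a b, d p) ^ 2
      = ∑ p ∈ Ioc a b, d p ^ 2 + 2 * ∑ p ∈ Ioc a b, ∑ q ∈ Ioc p b, d p * d q := by
  induction b with
  | zero => simp
  | succ b ih =>
    rcases le_or_gt a b with hab | hba
    · have hrow : ∀ p ∈ Ioc a b, ∑ q ∈ Ioc p (b + 1), d p * d q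
          = ∑ q ∈ Ioc p b, d p * d q + d p * d (b + 1) :=
        fun p hp => sum_Ioc_succ_top (mem_Ioc.mp hp).2 _
      rw [sum_Ioc_succ_top hab, sum_Ioc_succ_top hab, sum_Ioc_succ_top hab, sum_congr rfl hrow,
        Ioc_self, sum_empty, sum_add_distrib, ← sum_mul, add_sq, ih]
      ring
    · simp [Ioc_eq_empty_of_le (Nat.succ_le_of_lt hba)]

lemma sum_Ioc_sum_Ioc_mul_eq (d : ℕ → ℝ) {a b c : ℕ} (hbc : b ≤ c) :
    ∑ p ∈ Ioc a b, ∑ q ∈ Ioc p c, d p * d q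
      = ((∑ p ∈ Ioc a b, d p) ^ 2 - ∑ p ∈ Ioc a b, d p ^ 2) / 2
        + (∑ p ∈ Ioc a b, d p) * ∑ q ∈ Ioc b c, d q := by
  have hrow : ∀ p ∈ Ioc a b, ∑ q ∈ Ioc p c, d p * d q
      = ∑ q ∈ Ioc p b, d p * d q + d p * ∑ q ∈ Ioc b c, d q := fun p hp => by
    rw [← sum_Ioc_consecutive _ (mem_Ioc.mp hp).2 hbc, mul_sum]
  rw [sum_congr rfl hrow, sum_add_distrib, ← sum_mul, sq_sum_Ioc_eq_sum_sq_add_two_mul_sum_lt]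
  ring

lemma sq_sum_Ioc_le (d : ℕ → ℝ) {a b : ℕ} (hab : a ≤ b) :
    (∑ p ∈ Ioc a b, d p) ^ 2 ≤ ((b : ℝ) - a) * ∑ p ∈ Ioc a b, d p ^ 2 := by
  simpa [Nat.cast_sub hab] using sq_sum_le_card_mul_sum_sq (s := Ioc a b) (f := d)

lemma intermediate_slice_inequality {K M N A B SA SB : ℝ} (hK : 1 < K) (hKM : K < M) (hMN : M < N)
    (hA : A ^ 2 ≤ (M - K) * SA) (hB : B ^ 2 ≤ (N - M) * SB) :
    (M ^ 2 - 2 - N * (M - 2)) / (2 * (M - 1) * (N - M)) * B ^ 2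
      ≤ SA + SB - (1 / 2 - 1 / (2 * (K - 1))) * (A + B) ^ 2 + ((A ^ 2 - SA) / 2 + A * B) := by
  have hK1 : 0 < K - 1 := by linarith
  have hM1 : 0 < M - 1 := by linarith
  have hMK : 0 < M - K := by linarith
  have hNM : 0 < N - M := by linarith
  rw [← sub_nonneg]
  have hcert : SA + SB - (1 / 2 - 1 / (2 * (K - 1))) * (A + B) ^ 2 + ((A ^ 2 - SA) / 2 + A * B)
        - (M ^ 2 - 2 - N * (M - 2)) / (2 * (M - 1) * (N - M)) * B ^ 2
      = ((K - 1) * (M - 1) * (N - M) * ((M - K) * SA - A ^ 2)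
          + 2 * (K - 1) * (M - 1) * (M - K) * ((N - M) * SB - B ^ 2)
          + (N - M) * ((M - 1) * A + (M - K) * B) ^ 2)
        / (2 * (K - 1) * (M - 1) * (N - M) * (M - K)) := by
    field_simp
    ring
  rw [hcert]
  have hdefA : 0 ≤ (M - K) * SA - A ^ 2 := by linarith
  have hdefB : 0 ≤ (N - M) * SB - B ^ 2 := by linarith
  positivity

theorem stmt_1_general (n m k : ℕ) (hmn : m ≤ n - 1) (hk : 2 ≤ k) (hkm : k ≤ m - 1)
    (h : ℕ → ℕ → ℝ) (H : ℝ)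
    (hH : H = ∑ p ∈ Finset.Icc (k + 1) n, h p p) :
    ∑ p ∈ Finset.Icc (k + 1) n, ∑ q ∈ Finset.Icc (k + 1) n, (h p q) ^ 2
      - (1 / 2 - 1 / (2 * ((k : ℝ) - 1))) * H ^ 2
      + ∑ p ∈ Finset.Icc (k + 1) m, ∑ q ∈ Finset.Icc (p + 1) n, (h p p * h q q - (h p q) ^ 2)
    ≥ ((m : ℝ) ^ 2 - 2 - (n : ℝ) * ((m : ℝ) - 2)) / (2 * ((m : ℝ) - 1) * ((n : ℝ) - (m : ℝ)))
        * (∑ q ∈ Finset.Icc (m + 1) n, h q q) ^ 2 := by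
  have hkm' : k < m := by omega
  have hmn' : m < n := by omega
  simp only [Finset.Icc_add_one_left_eq_Ioc, sum_sub_distrib] at hH ⊢
  have hsq := sum_diag_add_sum_upper_le_sum_sum (g := fun p q => h p q ^ 2)
    (fun p q => sq_nonneg _) (a := k) hmn'.le
  have hprod := sum_Ioc_sum_Ioc_mul_eq (fun p => h p p) (a := k) hmn'.le
  have hdiag := sum_Ioc_consecutive (fun p => h p p ^ 2) hkm'.le hmn'.le
  have htrace := sum_Ioc_consecutive (fun p => h p p) hkm'.le hmn'.le
  have hkey := intermediate_slice_inequality (K := k) (M := m) (N := n) (by exact_mod_cast hk)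
    (by exact_mod_cast hkm') (by exact_mod_cast hmn') (sq_sum_Ioc_le (fun p => h p p) hkm'.le)
    (sq_sum_Ioc_le (fun p => h p p) hmn'.le)
  rw [hdiag, htrace, ← hH] at hkey
  linarith

/-- Extrinsic curvature terms on intermediate slices (algebraic content):
for a symmetric array `h` indexed by `k+1, …, n` with trace `H`. -/
theorem stmt_1 (n m k : ℕ) (hm : 3 ≤ m) (hmn : m ≤ n - 1) (hk : 2 ≤ k) (hkm : k ≤ m - 1)
    (h : ℕ → ℕ → ℝ) (H : ℝ)
    (hsym : ∀ p ∈ Finset.Icc (k + 1) n, ∀ q ∈ Finset.Icc (k + 1) n, h p q = h q p)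
    (hH : H = ∑ p ∈ Finset.Icc (k + 1) n, h p p) :
    ∑ p ∈ Finset.Icc (k + 1) n, ∑ q ∈ Finset.Icc (k + 1) n, (h p q) ^ 2
      - (1 / 2 - 1 / (2 * ((k : ℝ) - 1))) * H ^ 2
      + ∑ p ∈ Finset.Icc (k + 1) m, ∑ q ∈ Finset.Icc (p + 1) n, (h p p * h q q - (h p q) ^ 2)
    ≥ ((m : ℝ) ^ 2 - 2 - (n : ℝ) * ((m : ℝ) - 2)) / (2 * ((m : ℝ) - 1) * ((n : ℝ) - (m : ℝ)))
        * (∑ q ∈ Finset.Icc (m + 1) n, h q q) ^ 2 :=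
  stmt_1_general n m k hmn hk hkm h H hH
end

section
/- Let $n, m$ be integers with $2 \le m \le n-1$ and let $a_2, \dots, a_n$ be real numbers with $\sum_{p=2}^n a_p = 0$. Then $$\sum_{p=2}^n a_p^2 \; + \; \sum_{p=2}^m \sum_{q=p+1}^n a_p a_q \; \ge \; \frac{m^2 - 2 - n(m-2)}{2(n-m)(m-1)} \left( \sum_{p=2}^m a_p \right)^2.$$ -/
open Finset

lemma tri_aux (f : ℕ → ℝ) : ∀ m : ℕ,
    (∑ i ∈ Finset.Ioc 1 m, f i) ^ 2 =
      ∑ i ∈ Finset.Ioc 1 m, f i ^ 2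
        + 2 * ∑ p ∈ Finset.Ioc 1 m, ∑ q ∈ Finset.Ioc p m, f p * f q := by
  intro m
  induction m with
  | zero => simp
  | succ m ih =>
    rcases Nat.lt_or_ge m 1 with hm | hm
    · interval_cases m <;> simp [Nat.Ioc_succ_singleton]
    · have h1 : ∑ p ∈ Finset.Ioc 1 (m+1), ∑ q ∈ Finset.Ioc p (m+1), f p * f q
          = (∑ p ∈ Finset.Ioc 1 m, ∑ q ∈ Finset.Ioc p (m+1), f p * f q)
            + ∑ q ∈ Finset.Ioc (m+1) (m+1), f (m+1) * f q :=
        Finset.sum_Ioc_succ_top hm fun p => ∑ q ∈ Finset.Ioc p (m+1), f p * f q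
      have h2 : ∑ p ∈ Finset.Ioc 1 m, ∑ q ∈ Finset.Ioc p (m+1), f p * f q
          = ∑ p ∈ Finset.Ioc 1 m, ((∑ q ∈ Finset.Ioc p m, f p * f q) + f p * f (m+1)) := by
        refine Finset.sum_congr rfl fun p hp => ?_
        exact Finset.sum_Ioc_succ_top (Finset.mem_Ioc.mp hp).2 _
      rw [Finset.sum_Ioc_succ_top hm f, Finset.sum_Ioc_succ_top hm (fun i => f i ^ 2), h1, h2,
        Finset.sum_add_distrib, ← Finset.sum_mul]
      simp only [Finset.Ioc_self, Finset.sum_empty, add_zero]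
      nlinarith [ih]

/-- Diagonal case of the top-slice estimate: `a p` plays the role of the
diagonal entries of the second fundamental form of the minimal top slice. -/
theorem stmt_3 (n m : ℕ) (hm : 2 ≤ m) (hmn : m ≤ n - 1) (a : ℕ → ℝ)
    (htrace : ∑ p ∈ Finset.Icc 2 n, a p = 0) :
    ∑ p ∈ Finset.Icc 2 n, (a p) ^ 2
      + ∑ p ∈ Finset.Icc 2 m, ∑ q ∈ Finset.Icc (p + 1) n, a p * a q
    ≥ ((m : ℝ) ^ 2 - 2 - (n : ℝ) * ((m : ℝ) - 2)) / (2 * ((n : ℝ) - (m : ℝ)) * ((m : ℝ) - 1))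
        * (∑ p ∈ Finset.Icc 2 m, a p) ^ 2 := by
  have hn0 : 1 ≤ n := by omega
  have hmn' : m < n := by omega
  have hIcc : ∀ k : ℕ, Finset.Icc 2 k = Finset.Ioc 1 k := fun k => Finset.Icc_add_one_left_eq_Ioc 1 k
  -- abbreviations
  set S := ∑ p ∈ Finset.Ioc 1 m, a p with hS
  set T := ∑ p ∈ Finset.Ioc m n, a p with hT
  set A₁ := ∑ p ∈ Finset.Ioc 1 m, (a p) ^ 2 with hA1def
  set A₂ := ∑ p ∈ Finset.Ioc m n, (a p) ^ 2 with hA2def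
  set U := ∑ p ∈ Finset.Ioc 1 m, ∑ q ∈ Finset.Ioc p m, a p * a q with hUdef
  have h1m : (1:ℕ) ≤ m := by omega
  have hmn'' : m ≤ n := le_of_lt hmn'
  -- trace split
  have htr : S + T = 0 := by
    rw [hS, hT, Finset.sum_Ioc_consecutive a h1m hmn'', ← hIcc, htrace]
  -- sum of squares split
  have hsq : ∑ p ∈ Finset.Icc 2 n, (a p) ^ 2 = A₁ + A₂ := by
    rw [hIcc, ← Finset.sum_Ioc_consecutive (fun i => a i ^ 2) h1m hmn'']
  -- double sum split
  have hds : ∑ p ∈ Finset.Icc 2 m, ∑ q ∈ Finset.Icc (p + 1) n, a p * a q = U + S * T := by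
    rw [hIcc]
    have : ∀ p ∈ Finset.Ioc 1 m, ∑ q ∈ Finset.Icc (p + 1) n, a p * a q
        = (∑ q ∈ Finset.Ioc p m, a p * a q) + a p * T := by
      intro p hp
      have hpm : p ≤ m := (Finset.mem_Ioc.mp hp).2
      rw [Finset.Icc_add_one_left_eq_Ioc, ← Finset.sum_Ioc_consecutive (fun q => a p * a q) hpm hmn'',
        ← Finset.mul_sum, ← Finset.mul_sum]
    rw [Finset.sum_congr rfl this, Finset.sum_add_distrib, ← Finset.sum_mul]
  -- triangle identity
  have htri : S ^ 2 = A₁ + 2 * U := tri_aux a m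
  -- Cauchy-Schwarz on both blocks
  have hc1 : S ^ 2 ≤ ((m : ℝ) - 1) * A₁ := by
    have := sq_sum_le_card_mul_sum_sq (s := Finset.Ioc 1 m) (f := a)
    rwa [Nat.card_Ioc, Nat.cast_sub h1m, Nat.cast_one] at this
  have hc2 : T ^ 2 ≤ ((n : ℝ) - m) * A₂ := by
    have := sq_sum_le_card_mul_sum_sq (s := Finset.Ioc m n) (f := a)
    rwa [Nat.card_Ioc, Nat.cast_sub hmn''] at this
  rw [hsq, hds]
  have hcpos : (0:ℝ) < (m : ℝ) - 1 := by
    have : (2:ℝ) ≤ m := by exact_mod_cast hm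
    linarith
  have hdpos : (0:ℝ) < (n : ℝ) - m := by
    have : (m:ℝ) < n := by exact_mod_cast hmn'
    linarith
  have hTS : T = -S := by linarith
  rw [hTS] at hc2 hds ⊢
  have hSeq : (∑ p ∈ Finset.Icc 2 m, a p) = S := by rw [hIcc]
  rw [hSeq, div_mul_eq_mul_div, ge_iff_le, div_le_iff₀ (by positivity)]
  nlinarith [mul_le_mul_of_nonneg_left hc1 hdpos.le, mul_le_mul_of_nonneg_left hc2 hcpos.le,
    mul_pos hcpos hdpos]
end

section
/- Let $n \ge 2$ and $1 \le m \le n-1$ be integers, let $E = $ EuclideanSpace $\mathbb{R}$ (Fin $n$) be $\mathbb{R}^n$ with its standard inner product, and let $R : E \times E \times E \times E \to \mathbb{R}$ be multilinear with $R(x,y,z,w) = -R(y,x,z,w)$ and $R(x,y,z,w) = R(z,w,x,y)$ for all $x,y,z,w \in E$. If $(e_1,\dots,e_n)$ and $(f_1,\dots,f_n)$ are two orthonormal bases of $E$ such that $\mathrm{span}\{e_1,\dots,e_m\} = \mathrm{span}\{f_1,\dots,f_m\}$, then $$\sum_{p=1}^m \sum_{q=p+1}^n R(e_p,e_q,e_p,e_q)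 \; = \; \sum_{p=1}^m \sum_{q=p+1}^n R(f_p,f_q,f_p,f_q).$$ -/
/-!
For a bilinear form `B`, the sum `∑ B (b i) (b i)` over an orthonormal basis `b` of a subspace `V`
is the trace of `B` on `V`, hence depends only on `V`. The form `K x y = R x y x y` is symmetric
with `K x x = 0`, so the `m`-intermediate curvature equals
`∑_{p ≤ m} ∑_{q ≤ n} K (e p) (e q) - ½ ∑_{p, q ≤ m} K (e p) (e q)`, and each of these double sums is
an iterated trace, over `V = span {e_1, …, e_m}` in `p` and over `V` or all of `E` in `q`.
-/

open Finset

namespace Finset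

variable {ι M : Type*} [LinearOrder ι] [AddCommMonoid M]

theorem sum_sum_eq_two_nsmul_sum_sum_filter_lt (s : Finset ι) (Q : ι → ι → M)
    (hQ : ∀ p q, Q p q = Q q p) (hdiag : ∀ p, Q p p = 0) :
    ∑ p ∈ s, ∑ q ∈ s, Q p q = 2 • ∑ p ∈ s, ∑ q ∈ s with p < q, Q p q := by
  have hsplit : ∀ p q, Q p q = (if p < q then Q p q else 0) + (if q < p then Q p q else 0) := by
    intro p q
    rcases lt_trichotomy p q with h | rfl | h
    · simp [h, h.not_gt]
    · simp [hdiag]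
    · simp [h, h.not_gt]
  have hswap : ∑ p ∈ s, ∑ q ∈ s with q < p, Q p q = ∑ p ∈ s, ∑ q ∈ s with p < q, Q p q := by
    simp only [sum_filter]
    rw [sum_comm]
    simp_rw [hQ]
  calc ∑ p ∈ s, ∑ q ∈ s, Q p q
      = ∑ p ∈ s, ∑ q ∈ s with p < q, Q p q + ∑ p ∈ s, ∑ q ∈ s with q < p, Q p q := by
        rw [← sum_add_distrib]
        refine sum_congr rfl fun p _ => ?_
        rw [sum_filter, sum_filter, ← sum_add_distrib]
        exact sum_congr rfl fun q _ => hsplit p q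
    _ = 2 • ∑ p ∈ s, ∑ q ∈ s with p < q, Q p q := by rw [hswap, two_nsmul]

theorem two_nsmul_sum_sum_filter_lt_add_sum_sum [Fintype ι] [DecidableEq ι] {s : Finset ι}
    (hs : ∀ p ∈ s, ∀ q ∉ s, p < q) (Q : ι → ι → M)
    (hQ : ∀ p q, Q p q = Q q p) (hdiag : ∀ p, Q p p = 0) :
    2 • ∑ p ∈ s, ∑ q with p < q, Q p q + ∑ p ∈ s, ∑ q ∈ s, Q p q
      = 2 • ∑ p ∈ s, ∑ q, Q p q := by
  have hsplit : ∀ p ∈ s, ∑ q with p < q, Q p q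
      = ∑ q ∈ sᶜ, Q p q + ∑ q ∈ s with p < q, Q p q := by
    intro p hp
    rw [← sum_filter_add_sum_filter_not _ (· ∉ s), filter_filter, filter_filter]
    congr 1
    · refine sum_congr ?_ fun _ _ => rfl
      ext q
      simp only [mem_filter, mem_univ, true_and, mem_compl]
      exact ⟨fun h => h.2, fun h => ⟨hs p hp q h, h⟩⟩
    · refine sum_congr ?_ fun _ _ => rfl
      ext q
      simp only [mem_filter, mem_univ, true_and, not_not]
      exact and_comm
  have hcompl : ∑ p ∈ s, ∑ q, Q p q
      = ∑ p ∈ s, ∑ q ∈ sᶜ, Q p q + ∑ p ∈ s, ∑ q ∈ s, Q p q := by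
    rw [← sum_add_distrib]
    exact sum_congr rfl fun p _ => (sum_compl_add_sum s (Q p)).symm
  rw [sum_congr rfl hsplit, sum_add_distrib, hcompl,
    sum_sum_eq_two_nsmul_sum_sum_filter_lt s Q hQ hdiag]
  abel

end Finset

namespace OrthonormalBasis

variable {ι κ F : Type*} [Fintype ι] [Fintype κ] [NormedAddCommGroup F] [InnerProductSpace ℝ F]

theorem sum_apply_self_eq (B : F →ₗ[ℝ] F →ₗ[ℝ] ℝ) (b : OrthonormalBasis ι ℝ F)
    (b' : OrthonormalBasis κ ℝ F) : ∑ i, B (b i) (b i) = ∑ j, B (b' j) (b' j) :=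
  calc ∑ i, B (b i) (b i) = ∑ i, ∑ j, B (b' j) (inner ℝ (b' j) (b i) • b i) := by
        refine sum_congr rfl fun i _ => ?_
        nth_rewrite 1 [← b'.sum_repr' (b i)]
        simp only [map_sum, map_smul, LinearMap.sum_apply, LinearMap.smul_apply, smul_eq_mul]
    _ = ∑ j, B (b' j) (b' j) := by
        rw [sum_comm]
        refine sum_congr rfl fun j _ => ?_
        calc ∑ i, B (b' j) (inner ℝ (b' j) (b i) • b i)
            = B (b' j) (∑ i, inner ℝ (b i) (b' j) • b i) := by simp only [map_sum, real_inner_comm]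
          _ = B (b' j) (b' j) := by rw [b.sum_repr']

end OrthonormalBasis

variable {ι κ E : Type*} [NormedAddCommGroup E] [InnerProductSpace ℝ E]

theorem Orthonormal.sum_apply_self_eq_of_span_eq {g : ι → E} {h : κ → E}
    (hg : Orthonormal ℝ g) (hh : Orthonormal ℝ h) {s : Finset ι} {t : Finset κ}
    (hst : Submodule.span ℝ (g '' s) = Submodule.span ℝ (h '' t)) (B : E →ₗ[ℝ] E →ₗ[ℝ] ℝ) :
    ∑ i ∈ s, B (g i) (g i) = ∑ j ∈ t, B (h j) (h j) := by
  classical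
  have hV : Submodule.span ℝ (t.image h : Set E) = Submodule.span ℝ (s.image g : Set E) := by
    simpa using hst.symm
  have := (OrthonormalBasis.span hg s).sum_apply_self_eq
    (B.compl₁₂ (Submodule.subtype _) (Submodule.subtype _))
    ((OrthonormalBasis.span hh t).map (LinearIsometryEquiv.ofEq _ _ hV))
  simpa [← sum_coe_sort s, ← sum_coe_sort t] using this

theorem sum_sum_apply_eq_of_span_eq
    (R : E →ₗ[ℝ] E →ₗ[ℝ] E →ₗ[ℝ] E →ₗ[ℝ] ℝ) (hR : ∀ x y, R x y x y = R y x y x)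
    {g h : ι → E} (hg : Orthonormal ℝ g) (hh : Orthonormal ℝ h) {s t : Finset ι}
    (hs : Submodule.span ℝ (g '' s) = Submodule.span ℝ (h '' s))
    (ht : Submodule.span ℝ (g '' t) = Submodule.span ℝ (h '' t)) :
    ∑ p ∈ s, ∑ q ∈ t, R (g p) (g q) (g p) (g q) = ∑ p ∈ s, ∑ q ∈ t, R (h p) (h q) (h p) (h q) :=
  calc _ = ∑ p ∈ s, ∑ q ∈ t, R (g p) (h q) (g p) (h q) := sum_congr rfl fun p _ => by
        simpa using hg.sum_apply_self_eq_of_span_eq hh ht ((R (g p)).flip (g p))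
    _ = ∑ q ∈ t, ∑ p ∈ s, R (h q) (g p) (h q) (g p) := by
        rw [sum_comm]; exact sum_congr rfl fun q _ => sum_congr rfl fun p _ => hR _ _
    _ = ∑ q ∈ t, ∑ p ∈ s, R (h q) (h p) (h q) (h p) := sum_congr rfl fun q _ => by
        simpa using hg.sum_apply_self_eq_of_span_eq hh hs ((R (h q)).flip (h q))
    _ = _ := by
        rw [sum_comm]; exact sum_congr rfl fun p _ => sum_congr rfl fun q _ => hR _ _

theorem stmt_13_general (n m : ℕ)
    (R : EuclideanSpace ℝ (Fin n) →ₗ[ℝ] EuclideanSpace ℝ (Fin n) →ₗ[ℝ]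
          EuclideanSpace ℝ (Fin n) →ₗ[ℝ] EuclideanSpace ℝ (Fin n) →ₗ[ℝ] ℝ)
    (hanti : ∀ x y z w, R x y z w = - R y x z w)
    (hpair : ∀ x y z w, R x y z w = R z w x y)
    (e f : OrthonormalBasis (Fin n) ℝ (EuclideanSpace ℝ (Fin n)))
    (hspan : Submodule.span ℝ (⇑e '' {p : Fin n | (p : ℕ) < m})
      = Submodule.span ℝ (⇑f '' {p : Fin n | (p : ℕ) < m})) :
    ∑ p ∈ Finset.univ.filter (fun p : Fin n => (p : ℕ) < m),
      ∑ q ∈ Finset.univ.filter (fun q : Fin n => p < q), R (e p) (e q) (e p) (e q)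
    = ∑ p ∈ Finset.univ.filter (fun p : Fin n => (p : ℕ) < m),
      ∑ q ∈ Finset.univ.filter (fun q : Fin n => p < q), R (f p) (f q) (f p) (f q) := by
  set M := univ.filter fun p : Fin n => (p : ℕ) < m
  have hM : ∀ p ∈ M, ∀ q ∉ M, p < q := by
    simp only [M, mem_filter, mem_univ, true_and, not_lt, Fin.lt_def]
    omega
  have hspanM : Submodule.span ℝ (e '' M) = Submodule.span ℝ (f '' M) := by simpa [M] using hspan
  have hspanU : Submodule.span ℝ (e '' (univ : Finset (Fin n)))
      = Submodule.span ℝ (f '' (univ : Finset (Fin n))) := by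
    rw [coe_univ, Set.image_univ, Set.image_univ, ← e.coe_toBasis, ← f.coe_toBasis,
      e.toBasis.span_eq, f.toBasis.span_eq]
  have hsymm : ∀ x y, R x y x y = R y x y x := fun x y => by
    linarith [hanti x y x y, hpair y x x y, hanti y x y x]
  have hdiag : ∀ x, R x x x x = 0 := fun x => by linarith [hanti x x x x]
  have hcurvature (b : OrthonormalBasis (Fin n) ℝ (EuclideanSpace ℝ (Fin n))) :=
    two_nsmul_sum_sum_filter_lt_add_sum_sum hM (fun p q => R (b p) (b q) (b p) (b q))
      (fun p q => hsymm _ _) (fun p => hdiag _)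
  have hA := sum_sum_apply_eq_of_span_eq R hsymm e.orthonormal f.orthonormal hspanM hspanU
  have hD := sum_sum_apply_eq_of_span_eq R hsymm e.orthonormal f.orthonormal hspanM hspanM
  have he := hcurvature e
  have hf := hcurvature f
  simp only [nsmul_eq_mul, Nat.cast_ofNat] at he hf
  linarith

/-- The `m`-intermediate curvature `𝒞_m(e_1, …, e_m)` of an algebraic
curvature-like tensor depends only on the span of the first `m` basis vectors. -/
theorem stmt_13 (n m : ℕ) (hn : 2 ≤ n) (hm1 : 1 ≤ m) (hmn : m ≤ n - 1)
    (R : EuclideanSpace ℝ (Fin n) →ₗ[ℝ] EuclideanSpace ℝ (Fin n) →ₗ[ℝ]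
          EuclideanSpace ℝ (Fin n) →ₗ[ℝ] EuclideanSpace ℝ (Fin n) →ₗ[ℝ] ℝ)
    (hanti : ∀ x y z w, R x y z w = - R y x z w)
    (hpair : ∀ x y z w, R x y z w = R z w x y)
    (e f : OrthonormalBasis (Fin n) ℝ (EuclideanSpace ℝ (Fin n)))
    (hspan : Submodule.span ℝ (⇑e '' {p : Fin n | (p : ℕ) < m})
      = Submodule.span ℝ (⇑f '' {p : Fin n | (p : ℕ) < m})) :
    ∑ p ∈ Finset.univ.filter (fun p : Fin n => (p : ℕ) < m),
      ∑ q ∈ Finset.univ.filter (fun q : Fin n => p < q), R (e p) (e q) (e p) (e q)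
    = ∑ p ∈ Finset.univ.filter (fun p : Fin n => (p : ℕ) < m),
      ∑ q ∈ Finset.univ.filter (fun q : Fin n => p < q), R (f p) (f q) (f p) (f q) :=
  stmt_13_general n m R hanti hpair e f hspan
end
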